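/- arXiv:2302.03333 — 3 statements merged into one kernel-verified Lean document; each statement's English description precedes it below -/
import Mathlib

section
/- Let p > 1 and μ > 0 be real numbers. Then for every ξ ∈ ℝ, (μ² |ξ|³ / (1 + (μξ)²)) · (1 + ξ²)^{−p/2} ≤ max(μ^{p−1}, μ^{−1}). (This is the multiplier bound for the Tikhonov regularization R₁ of numerical differentiation: the symbol of φ′ − R₁(φ′) is i μ²ξ³/(1+(μξ)²).) -/
/-- Multiplier bound for the Tikhonov regularization of numerical differentiation:
for `p > 1`, `μ > 0`, and every `ξ ∈ ℝ`,
`(μ² |ξ|³ / (1 + (μξ)²)) * (1 + ξ²)^(-p/2) ≤ max (μ^(p-1)) (μ⁻¹)`. -/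
theorem tikhonov_multiplier_bound
    (p μ : ℝ) (hp : 1 < p) (hμ : 0 < μ) (ξ : ℝ) :
    (μ ^ 2 * |ξ| ^ 3 / (1 + (μ * ξ) ^ 2)) * (1 + ξ ^ 2) ^ (-(p / 2))
      ≤ max (μ ^ (p - 1)) μ⁻¹ := by
  have hone : (1 : ℝ) ≤ max (μ ^ (p - 1)) μ⁻¹ := by
    rcases le_total 1 μ with h | h
    · refine le_max_of_le_left ?_
      have := Real.rpow_le_rpow_of_exponent_le h (show (0:ℝ) ≤ p - 1 by linarith)
      simpa using this
    · exact le_max_of_le_right ((one_le_inv₀ hμ).mpr h)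
  refine le_trans ?_ hone
  have hA : μ ^ 2 * |ξ| ^ 3 / (1 + (μ * ξ) ^ 2) ≤ |ξ| := by
    rw [div_le_iff₀ (by positivity)]
    have h3 : |ξ| ^ 3 = |ξ| * ξ ^ 2 := by rw [← sq_abs ξ]; ring
    nlinarith [abs_nonneg ξ, h3]
  have hB : (1 + ξ ^ 2) ^ (-(p / 2)) ≤ (1 + ξ ^ 2) ^ (-(1/2) : ℝ) :=
    Real.rpow_le_rpow_of_exponent_le (by nlinarith [sq_nonneg ξ]) (by linarith)
  have hBnn : (0:ℝ) ≤ (1 + ξ ^ 2) ^ (-(p / 2)) := by positivity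
  have hB' : |ξ| * (1 + ξ ^ 2) ^ (-(1/2) : ℝ) ≤ 1 := by
    have hs : |ξ| ≤ Real.sqrt (1 + ξ ^ 2) := by
      rw [show |ξ| = Real.sqrt (ξ ^ 2) from (Real.sqrt_sq_eq_abs ξ).symm]
      exact Real.sqrt_le_sqrt (by linarith)
    rw [show (-(1/2) : ℝ) = -(1/2 : ℝ) from rfl, Real.rpow_neg (by positivity),
      ← Real.sqrt_eq_rpow, ← div_eq_mul_inv,
      div_le_one (Real.sqrt_pos.mpr (by positivity))]
    exact hs
  calc μ ^ 2 * |ξ| ^ 3 / (1 + (μ * ξ) ^ 2) * (1 + ξ ^ 2) ^ (-(p / 2))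
      ≤ |ξ| * (1 + ξ ^ 2) ^ (-(1/2) : ℝ) :=
        mul_le_mul hA hB hBnn (abs_nonneg ξ)
    _ ≤ 1 := hB'
end

section
/- Let p > 1 and μ > 0 be real numbers and let g : ℝ → ℂ be a measurable function. Then, with both integrals taken in [0,∞], ∫_ℝ (μ² |ξ|³ / (1 + (μξ)²))² |g(ξ)|² dξ ≤ (max(μ^{p−1}, μ^{−1}))² · ∫_ℝ (1 + ξ²)^p |g(ξ)|² dξ. (Applied to g = φ̂, the Fourier transform of φ, this is the error estimate ‖φ′ − R₁(φ′)‖_{L²(ℝ)} ≤ max(μ^{p−1}, μ^{−1}) ‖φ‖_{H^p(ℝ)} for the Tikhonov regularization R₁(φ′)(t) = (2π)^{−1/2} ∫ iξ/(1+(μξ)²) φ̂(ξ) e^{iξt} dξ, via Plancherel's theorem.) -/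
/-!
The error multiplier `μ²|ξ|³/(1+(μξ)²) = |ξ| · (μξ)²/(1+(μξ)²)` never exceeds `|ξ|`, and
`ξ² ≤ (1+ξ²)^p` once `p ≥ 1`, so the estimate already holds pointwise with constant `1`,
and `max (μ^(p-1)) μ⁻¹ ≥ 1`.
-/

open MeasureTheory

theorem one_le_max_rpow_sub_one_inv {p μ : ℝ} (hp : 1 ≤ p) (hμ : 0 < μ) :
    1 ≤ max (μ ^ (p - 1)) μ⁻¹ := by
  rcases le_or_gt 1 μ with h | h
  · exact le_max_of_le_left (Real.one_le_rpow h (by linarith))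
  · exact le_max_of_le_right ((one_le_inv₀ hμ).mpr h.le)

theorem mul_abs_pow_three_div_one_add_sq_le_abs (μ ξ : ℝ) :
    μ ^ 2 * |ξ| ^ 3 / (1 + (μ * ξ) ^ 2) ≤ |ξ| := by
  rw [div_le_iff₀ (by positivity), show |ξ| ^ 3 = ξ ^ 2 * |ξ| by rw [pow_succ, sq_abs], mul_pow]
  nlinarith [abs_nonneg ξ]

theorem sq_le_one_add_sq_rpow {p : ℝ} (hp : 1 ≤ p) (ξ : ℝ) : ξ ^ 2 ≤ (1 + ξ ^ 2) ^ p :=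
  calc ξ ^ 2 ≤ 1 + ξ ^ 2 := by linarith
    _ ≤ (1 + ξ ^ 2) ^ p := Real.self_le_rpow_of_one_le (by nlinarith [sq_nonneg ξ]) hp

theorem tikhonov_error_multiplier_sq_le {p : ℝ} (hp : 1 ≤ p) (μ ξ : ℝ) :
    (μ ^ 2 * |ξ| ^ 3 / (1 + (μ * ξ) ^ 2)) ^ 2 ≤ (1 + ξ ^ 2) ^ p :=
  calc (μ ^ 2 * |ξ| ^ 3 / (1 + (μ * ξ) ^ 2)) ^ 2 ≤ |ξ| ^ 2 :=
        pow_le_pow_left₀ (by positivity) (mul_abs_pow_three_div_one_add_sq_le_abs μ ξ) 2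
    _ = ξ ^ 2 := sq_abs ξ
    _ ≤ (1 + ξ ^ 2) ^ p := sq_le_one_add_sq_rpow hp ξ

theorem tikhonov_error_estimate_general
    (p μ : ℝ) (hp : 1 < p) (hμ : 0 < μ) (g : ℝ → ℂ) :
    ∫⁻ ξ : ℝ, ENNReal.ofReal
        ((μ ^ 2 * |ξ| ^ 3 / (1 + (μ * ξ) ^ 2)) ^ 2 * ‖g ξ‖ ^ 2)
      ≤ ENNReal.ofReal ((max (μ ^ (p - 1)) μ⁻¹) ^ 2) *
        ∫⁻ ξ : ℝ, ENNReal.ofReal ((1 + ξ ^ 2) ^ p * ‖g ξ‖ ^ 2) := by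
  have hconst : 1 ≤ ENNReal.ofReal ((max (μ ^ (p - 1)) μ⁻¹) ^ 2) :=
    ENNReal.one_le_ofReal.mpr (one_le_pow₀ (one_le_max_rpow_sub_one_inv hp.le hμ))
  calc _ ≤ ∫⁻ ξ : ℝ, ENNReal.ofReal ((1 + ξ ^ 2) ^ p * ‖g ξ‖ ^ 2) :=
        lintegral_mono fun ξ => ENNReal.ofReal_le_ofReal <|
          mul_le_mul_of_nonneg_right (tikhonov_error_multiplier_sq_le hp.le μ ξ) (by positivity)
    _ ≤ _ := le_mul_of_one_le_left zero_le hconst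

/-- Error estimate for the Tikhonov regularization `R₁` of numerical differentiation
(in Fourier variables, via Plancherel): for `p > 1`, `μ > 0` and measurable `g : ℝ → ℂ`,
with both integrals taken in `[0,∞]`,
`∫ (μ²|ξ|³/(1+(μξ)²))² |g(ξ)|² dξ ≤ (max (μ^(p-1)) μ⁻¹)² ∫ (1+ξ²)^p |g(ξ)|² dξ`. -/
theorem tikhonov_error_estimate
    (p μ : ℝ) (hp : 1 < p) (hμ : 0 < μ) (g : ℝ → ℂ) (hg : Measurable g) :
    ∫⁻ ξ : ℝ, ENNReal.ofReal
        ((μ ^ 2 * |ξ| ^ 3 / (1 + (μ * ξ) ^ 2)) ^ 2 * ‖g ξ‖ ^ 2)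
      ≤ ENNReal.ofReal ((max (μ ^ (p - 1)) μ⁻¹) ^ 2) *
        ∫⁻ ξ : ℝ, ENNReal.ofReal ((1 + ξ ^ 2) ^ p * ‖g ξ‖ ^ 2) :=
  tikhonov_error_estimate_general p μ hp hμ g
end

section
/- Let d ≥ 1, let D ⊆ ℝ^d (Euclidean space) be a nonempty open, bounded, connected set, let T > 0, and let v : ℝ^d → ℝ → ℝ and u₀ : ℝ^d → ℝ. Assume: (i) v is continuous on (closure D) × [0,T]; (ii) for each t ∈ (0,T] the map x ↦ v(x,t) is twice continuously differentiable on D, and for each x ∈ D the map t ↦ v(x,t) is differentiable on (0,T] with ∂v/∂t(x,t) = Δ_x v(x,t), where Δ_x is the Laplacian in the spatial variable; (iii) v(x,t) = 0 for all x in the boundary of D and t ∈ (0,T]; (iv) v(x,0) = u₀(x) for x ∈ closure D, where u₀ is continuous, u₀ ≥ 0 on D, and u₀ is not identically zero on D. Then v(x,t) > 0 for all (x,t) ∈ D × (0,T]. (Lemma 2.2: strict positivity of the solution of the deterministic heat equation with nonnegative, nontrivial initial data, by the strong maximum principle.) -/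
/-!
Comparing `v` with the strict subsolutions `-ε t` on the compact cylinder `closure D × [0,T]`
gives the weak minimum principle `v ≥ 0`: at an interior minimum of `v - φ` one would have
`Δφ ≤ Δv = ∂ₜv ≤ ∂ₜφ < Δφ`. Positivity then spreads: if `v ≥ c > 0` on `B(y,r)` at time `s` and
`B̄(y,R) ⊆ D`, comparison with the barrier `ε e^{-μ(τ-s)} (r² + β(τ-s) - |z-y|²)₊²`, whose support
grows to `B(y,R)` at time `t`, shows `v(·,t) > 0` on `B(y,R)`. Starting from a point where
`u₀ > 0`, the set of points of `D` at which `v > 0` throughout `(0,T]` is therefore open and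
relatively closed in `D`, hence all of `D`.
-/

open Set

/-- The Laplacian of `f : ℝ^d → ℝ`: the sum of the second partial derivatives along the
standard orthonormal basis (equivalently, the trace of the second derivative). -/
noncomputable def laplacian {d : ℕ} (f : EuclideanSpace ℝ (Fin d) → ℝ)
    (x : EuclideanSpace ℝ (Fin d)) : ℝ :=
  ∑ i : Fin d, fderiv ℝ (fun y => fderiv ℝ f y (EuclideanSpace.single i 1)) x
      (EuclideanSpace.single i 1)

open Metric Filter Topology

theorem IsLocalMin.deriv_deriv_nonneg {g : ℝ → ℝ} {a : ℝ} (hmin : IsLocalMin g a)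
    (hg : ContinuousAt g a) : 0 ≤ deriv (deriv g) a := by
  by_contra! hneg
  have hmax : IsLocalMax g a := isLocalMax_of_deriv_deriv_neg hneg hmin.deriv_eq_zero hg
  have hconst : g =ᶠ[𝓝 a] fun _ => g a := by
    filter_upwards [hmin, hmax] with s h₁ h₂ using le_antisymm h₂ h₁
  have : deriv (deriv g) a = 0 := by
    rw [hconst.deriv.deriv_eq]
    simp
  exact hneg.ne this

theorem HasDerivWithinAt.nonpos_of_isMinOn_Ioc {f : ℝ → ℝ} {f' a b t : ℝ}
    (hf : HasDerivWithinAt f f' (Ioc a b) t) (ht : t ∈ Ioc a b) (hmin : IsMinOn f (Ioc a b) t) :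
    f' ≤ 0 := by
  have hm : (a + t) / 2 ∈ Ioc a b := ⟨by linarith [ht.1], by linarith [ht.1, ht.2]⟩
  have hseg : segment ℝ t (t + ((a + t) / 2 - t)) ⊆ Ioc a b := by
    rw [add_sub_cancel]; exact (convex_Ioc a b).segment_subset ht hm
  have := hmin.localize.hasFDerivWithinAt_nonneg hf.hasFDerivWithinAt
    (mem_posTangentConeAt_of_segment_subset hseg)
  simp only [ContinuousLinearMap.toSpanSingleton_apply, smul_eq_mul] at this
  nlinarith [ht.1]

section SecondDerivative

variable {E F : Type*} [NormedAddCommGroup E] [NormedSpace ℝ E] [NormedAddCommGroup F]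
  [NormedSpace ℝ F]

theorem ContDiffAt.differentiableAt_fderiv_apply {f : E → F} {x : E} (hf : ContDiffAt ℝ 2 f x)
    (e : E) : DifferentiableAt ℝ (fun y => fderiv ℝ f y e) x :=
  ((hf.fderiv_right (m := 1) (by norm_num)).differentiableAt one_ne_zero).clm_apply
    (differentiableAt_const e)

theorem ContDiffAt.eventually_differentiableAt {f : E → F} {x : E} (hf : ContDiffAt ℝ 2 f x) :
    ∀ᶠ y in 𝓝 x, DifferentiableAt ℝ f y :=
  (hf.eventually (by simp)).mono fun _ hy => hy.differentiableAt (by norm_num)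

theorem IsLocalMin.fderiv_fderiv_apply_nonneg {f : E → ℝ} {x : E} (hmin : IsLocalMin f x)
    (hf : ContDiffAt ℝ 2 f x) (e : E) : 0 ≤ fderiv ℝ (fun y => fderiv ℝ f y e) x e := by
  have hline : ∀ s : ℝ, HasDerivAt (fun r : ℝ => x + r • e) e s := fun s => by
    simpa using ((hasDerivAt_id s).smul_const e).const_add x
  have hcont : ContinuousAt (fun r : ℝ => x + r • e) 0 := (hline 0).continuousAt
  have hx : x + (0 : ℝ) • e = x := by simp
  have hderiv : deriv (fun r => f (x + r • e)) =ᶠ[𝓝 (0 : ℝ)]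
      fun r => fderiv ℝ f (x + r • e) e := by
    filter_upwards [hcont.eventually (hx ▸ hf.eventually_differentiableAt)] with r hr
    exact (hr.hasFDerivAt.comp_hasDerivAt r (hline r)).deriv
  have hderiv2 : HasDerivAt (fun r => fderiv ℝ f (x + r • e) e)
      (fderiv ℝ (fun y => fderiv ℝ f y e) x e) (0 : ℝ) := by
    have := (hf.differentiableAt_fderiv_apply e).hasFDerivAt
    rw [← hx] at this
    simpa [Function.comp_def] using this.comp_hasDerivAt (0 : ℝ) (hline 0)
  rw [← hderiv2.deriv, ← hderiv.deriv_eq]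
  have hmin' : IsLocalMin f (x + (0 : ℝ) • e) := by rwa [hx]
  have hf' : ContinuousAt f (x + (0 : ℝ) • e) := by rw [hx]; exact hf.continuousAt
  exact (hmin'.comp_continuous (g := fun r : ℝ => x + r • e) hcont).deriv_deriv_nonneg
    (hf'.comp (f := fun r : ℝ => x + r • e) hcont)

end SecondDerivative

section Laplacian

variable {d : ℕ} {f g : EuclideanSpace ℝ (Fin d) → ℝ} {x : EuclideanSpace ℝ (Fin d)}

theorem Filter.EventuallyEq.laplacian_eq (h : f =ᶠ[𝓝 x] g) : laplacian f x = laplacian g x := by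
  refine Finset.sum_congr rfl fun i _ => ?_
  have : (fun y => fderiv ℝ f y (EuclideanSpace.single i 1)) =ᶠ[𝓝 x]
      fun y => fderiv ℝ g y (EuclideanSpace.single i 1) :=
    (h.fderiv (𝕜 := ℝ)).mono fun y hy => by simp only [hy]
  rw [this.fderiv_eq]

@[simp]
theorem laplacian_const (c : ℝ) : laplacian (fun _ : EuclideanSpace ℝ (Fin d) => c) x = 0 := by
  simp [laplacian]

theorem laplacian_sub (hf : ContDiffAt ℝ 2 f x) (hg : ContDiffAt ℝ 2 g x) :
    laplacian (fun y => f y - g y) x = laplacian f x - laplacian g x := by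
  rw [laplacian, laplacian, laplacian, ← Finset.sum_sub_distrib]
  refine Finset.sum_congr rfl fun i _ => ?_
  have : (fun y => fderiv ℝ (fun z => f z - g z) y (EuclideanSpace.single i 1)) =ᶠ[𝓝 x]
      fun y => fderiv ℝ f y (EuclideanSpace.single i 1) -
        fderiv ℝ g y (EuclideanSpace.single i 1) := by
    filter_upwards [hf.eventually_differentiableAt, hg.eventually_differentiableAt] with y hfy hgy
    rw [fderiv_fun_sub hfy hgy, sub_apply]
  rw [this.fderiv_eq, fderiv_fun_sub (hf.differentiableAt_fderiv_apply _)
    (hg.differentiableAt_fderiv_apply _), sub_apply]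

theorem IsLocalMin.laplacian_nonneg (hmin : IsLocalMin f x) (hf : ContDiffAt ℝ 2 f x) :
    0 ≤ laplacian f x :=
  Finset.sum_nonneg fun _ _ => hmin.fderiv_fderiv_apply_nonneg hf _

theorem IsLocalMin.laplacian_le_of_sub (hmin : IsLocalMin (fun y => f y - g y) x)
    (hf : ContDiffAt ℝ 2 f x) (hg : ContDiffAt ℝ 2 g x) : laplacian g x ≤ laplacian f x := by
  have := hmin.laplacian_nonneg (hf.sub hg)
  rw [laplacian_sub hf hg] at this
  linarith

theorem laplacian_comp {F F' : ℝ → ℝ} {F'' : ℝ} (hF : ∀ u, HasDerivAt F (F' u) u)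
    (hF' : HasDerivAt F' F'' (g x)) (hg : ContDiffAt ℝ 2 g x) :
    laplacian (F ∘ g) x =
      F'' * ∑ i, fderiv ℝ g x (EuclideanSpace.single i 1) ^ 2 + F' (g x) * laplacian g x := by
  rw [laplacian, laplacian, Finset.mul_sum, Finset.mul_sum, ← Finset.sum_add_distrib]
  refine Finset.sum_congr rfl fun i _ => ?_
  set e : EuclideanSpace ℝ (Fin d) := EuclideanSpace.single i 1
  have hchain : (fun y => fderiv ℝ (F ∘ g) y e) =ᶠ[𝓝 x] fun y => F' (g y) * fderiv ℝ g y e := by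
    filter_upwards [hg.eventually_differentiableAt] with y hy
    rw [((hF (g y)).comp_hasFDerivAt y hy.hasFDerivAt).fderiv]
    simp
  have hprod : HasFDerivAt (fun y => F' (g y) * fderiv ℝ g y e) _ x :=
    (hF'.comp_hasFDerivAt x (hg.differentiableAt (by norm_num)).hasFDerivAt).fun_mul
      (hg.differentiableAt_fderiv_apply e).hasFDerivAt
  rw [hchain.fderiv_eq, hprod.fderiv]
  simp only [Function.comp_apply, add_apply, smul_apply, smul_eq_mul]
  ring

end Laplacian

section NormSq

open scoped RealInnerProductSpace

theorem fderiv_norm_sub_sq_apply {F : Type*} [NormedAddCommGroup F] [InnerProductSpace ℝ F]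
    (y z e : F) : fderiv ℝ (fun w => ‖w - y‖ ^ 2) z e = 2 * ⟪z - y, e⟫ := by
  rw [((hasFDerivAt_sub_const y).norm_sq).fderiv]
  simp [inner_sub_left]

theorem contDiff_norm_sub_sq {F : Type*} [NormedAddCommGroup F] [InnerProductSpace ℝ F]
    {n : WithTop ℕ∞} (y : F) : ContDiff ℝ n fun w => ‖w - y‖ ^ 2 :=
  (contDiff_norm_sq ℝ).comp (contDiff_id.sub contDiff_const)

variable {d : ℕ} (y z : EuclideanSpace ℝ (Fin d))

theorem sum_fderiv_norm_sub_sq_sq :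
    ∑ i, fderiv ℝ (fun w => ‖w - y‖ ^ 2) z (EuclideanSpace.single i 1) ^ 2 = 4 * ‖z - y‖ ^ 2 := by
  simp_rw [fderiv_norm_sub_sq_apply, EuclideanSpace.inner_single_right,
    EuclideanSpace.real_norm_sq_eq, Finset.mul_sum]
  simp only [PiLp.sub_apply, Real.ringHom_apply, one_mul, mul_pow]
  norm_num

theorem laplacian_norm_sub_sq : laplacian (fun w => ‖w - y‖ ^ 2) z = 2 * d := by
  have (e : EuclideanSpace ℝ (Fin d)) : HasFDerivAt
      (fun w => fderiv ℝ (fun w => ‖w - y‖ ^ 2) w e) ((2 : ℝ) • innerSL ℝ e) z := by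
    simp_rw [fderiv_norm_sub_sq_apply]
    have h := ((innerSL ℝ e).hasFDerivAt.comp z (hasFDerivAt_sub_const y)).const_mul (2 : ℝ)
    rw [ContinuousLinearMap.comp_id] at h
    exact h.congr_of_eventuallyEq (Eventually.of_forall fun w => by simp [real_inner_comm])
  simp [laplacian, (this _).fderiv, mul_comm]

theorem laplacian_mul_sub_norm_sub_sq_sq (A b : ℝ) :
    laplacian (fun w => A * (b - ‖w - y‖ ^ 2) ^ 2) z =
      8 * A * ‖z - y‖ ^ 2 - 4 * d * A * (b - ‖z - y‖ ^ 2) := by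
  have hF (u : ℝ) : HasDerivAt (fun u => A * (b - u) ^ 2) (-2 * A * (b - u)) u :=
    ((((hasDerivAt_id u).const_sub b).pow 2).const_mul A).congr_deriv <| by
      simp only [Nat.cast_ofNat, id_eq, Nat.add_one_sub_one, pow_one, mul_neg, mul_one, neg_mul,
        neg_inj]
      ring
  have hF' : HasDerivAt (fun u => -2 * A * (b - u)) (2 * A) (‖z - y‖ ^ 2) :=
    (((hasDerivAt_id _).const_sub b).const_mul (-2 * A)).congr_deriv (by simp)
  rw [show (fun w => A * (b - ‖w - y‖ ^ 2) ^ 2) = (fun u => A * (b - u) ^ 2) ∘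
      fun w => ‖w - y‖ ^ 2 from rfl, laplacian_comp hF hF' (contDiff_norm_sub_sq y).contDiffAt,
    sum_fderiv_norm_sub_sq_sq, laplacian_norm_sub_sq]
  ring

end NormSq

section HeatEquation

variable {d : ℕ}

structure IsHeatSolution (D : Set (EuclideanSpace ℝ (Fin d))) (a b : ℝ)
    (v : EuclideanSpace ℝ (Fin d) → ℝ → ℝ) : Prop where
  continuousOn : ContinuousOn (fun p : EuclideanSpace ℝ (Fin d) × ℝ => v p.1 p.2)
    (closure D ×ˢ Icc a b)
  contDiffOn : ∀ t ∈ Ioc a b, ContDiffOn ℝ 2 (fun x => v x t) D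
  hasDerivWithinAt : ∀ x ∈ D, ∀ t ∈ Ioc a b,
    HasDerivWithinAt (fun τ => v x τ) (laplacian (fun y => v y t) x) (Ioc a b) t

def IsStrictSubsolutionAt (φ : EuclideanSpace ℝ (Fin d) → ℝ → ℝ)
    (x : EuclideanSpace ℝ (Fin d)) (t : ℝ) : Prop :=
  ContDiffAt ℝ 2 (fun y => φ y t) x ∧
    ∃ φ' < laplacian (fun y => φ y t) x, HasDerivAt (fun τ => φ x τ) φ' t

variable {D U : Set (EuclideanSpace ℝ (Fin d))} {a b a' b' : ℝ}
  {v φ : EuclideanSpace ℝ (Fin d) → ℝ → ℝ}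

theorem IsHeatSolution.mono (hv : IsHeatSolution D a b v) (hUD : U ⊆ D) (ha : a ≤ a')
    (hb : b' ≤ b) : IsHeatSolution U a' b' v where
  continuousOn := hv.continuousOn.mono (prod_mono (closure_mono hUD) (Icc_subset_Icc ha hb))
  contDiffOn t ht := (hv.contDiffOn t (Ioc_subset_Ioc ha hb ht)).mono hUD
  hasDerivWithinAt x hx t ht :=
    (hv.hasDerivWithinAt x (hUD hx) t (Ioc_subset_Ioc ha hb ht)).mono (Ioc_subset_Ioc ha hb)

theorem IsHeatSolution.not_isMinOn_sub (hv : IsHeatSolution D a b v) (hD : IsOpen D)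
    {x : EuclideanSpace ℝ (Fin d)} (hx : x ∈ D) {t : ℝ} (ht : t ∈ Ioc a b)
    (hφ : IsStrictSubsolutionAt φ x t)
    (hmin : IsMinOn (fun p : EuclideanSpace ℝ (Fin d) × ℝ => v p.1 p.2 - φ p.1 p.2)
      (D ×ˢ Ioc a b) (x, t)) : False := by
  obtain ⟨hφ_space, φ', hφ'_lt, hφ_time⟩ := hφ
  have hv_space : ContDiffAt ℝ 2 (fun y => v y t) x :=
    (hv.contDiffOn t ht).contDiffAt (hD.mem_nhds hx)
  have hspace : laplacian (fun y => φ y t) x ≤ laplacian (fun y => v y t) x := by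
    refine IsLocalMin.laplacian_le_of_sub ?_ hv_space hφ_space
    filter_upwards [hD.mem_nhds hx] with y hy using isMinOn_iff.1 hmin (y, t) ⟨hy, ht⟩
  have htime : laplacian (fun y => v y t) x - φ' ≤ 0 :=
    ((hv.hasDerivWithinAt x hx t ht).sub hφ_time.hasDerivWithinAt).nonpos_of_isMinOn_Ioc ht
      fun τ hτ => by simpa using isMinOn_iff.1 hmin (x, τ) ⟨hx, hτ⟩
  linarith

theorem IsHeatSolution.le_of_isStrictSubsolutionAt (hv : IsHeatSolution U a b v) (hU : IsOpen U)
    (hU_bdd : Bornology.IsBounded U)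
    (hφ_cont : ContinuousOn (fun p : EuclideanSpace ℝ (Fin d) × ℝ => φ p.1 p.2)
      (closure U ×ˢ Icc a b))
    (hφ : ∀ x ∈ U, ∀ t ∈ Ioc a b, v x t < φ x t → IsStrictSubsolutionAt φ x t)
    (h_init : ∀ x ∈ closure U, φ x a ≤ v x a)
    (h_bdry : ∀ x ∈ frontier U, ∀ t ∈ Ioc a b, φ x t ≤ v x t) :
    ∀ x ∈ closure U, ∀ t ∈ Icc a b, φ x t ≤ v x t := by
  intro x hx t ht
  obtain ⟨⟨x₀, t₀⟩, ⟨hx₀, ht₀⟩, hmin⟩ :=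
    (hU_bdd.isCompact_closure.prod isCompact_Icc).exists_isMinOn ⟨(x, t), hx, ht⟩
      (hv.continuousOn.sub hφ_cont)
  suffices φ x₀ t₀ ≤ v x₀ t₀ by
    have := isMinOn_iff.1 hmin (x, t) ⟨hx, ht⟩
    simp only [Pi.sub_apply] at this
    linarith
  by_contra! hlt
  have ht₀' : t₀ ∈ Ioc a b := by
    refine ⟨ht₀.1.lt_of_ne ?_, ht₀.2⟩
    rintro rfl
    exact hlt.not_ge (h_init x₀ hx₀)
  have hx₀' : x₀ ∈ U := by
    by_contra hx₀U
    exact hlt.not_ge (h_bdry x₀ ⟨hx₀, by rwa [hU.interior_eq]⟩ t₀ ht₀')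
  exact hv.not_isMinOn_sub hU hx₀' ht₀' (hφ x₀ hx₀' t₀ ht₀' hlt)
    (hmin.on_subset (prod_mono subset_closure Ioc_subset_Icc_self))

theorem IsHeatSolution.nonneg (hv : IsHeatSolution U a b v) (hU : IsOpen U)
    (hU_bdd : Bornology.IsBounded U) (h_init : ∀ x ∈ closure U, 0 ≤ v x a)
    (h_bdry : ∀ x ∈ frontier U, ∀ t ∈ Ioc a b, 0 ≤ v x t) :
    ∀ x ∈ closure U, ∀ t ∈ Icc a b, 0 ≤ v x t := by
  intro x hx t ht
  have hcomp : ∀ ε > 0, -ε * (t - a) ≤ v x t := fun ε hε =>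
    hv.le_of_isStrictSubsolutionAt (φ := fun _ τ => -ε * (τ - a)) hU hU_bdd (by fun_prop)
      (fun _ _ τ _ _ => ⟨contDiffAt_const, -ε, by simpa using hε,
        by simpa using ((hasDerivAt_id τ).sub_const a).const_mul (-ε)⟩)
      (fun y hy => by simpa using h_init y hy)
      (fun y hy τ hτ => le_trans (by nlinarith [hτ.1]) (h_bdry y hy τ hτ)) x hx t ht
  have hlim : Tendsto (fun ε : ℝ => -ε * (t - a)) (𝓝[>] 0) (𝓝 0) := by
    have : Continuous fun ε : ℝ => -ε * (t - a) := by fun_prop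
    exact (this.tendsto' 0 0 (by simp)).mono_left nhdsWithin_le_nhds
  exact le_of_tendsto hlim (eventually_nhdsWithin_of_forall hcomp)

end HeatEquation

section Barrier

variable {d : ℕ}

noncomputable def heatBarrier (y : EuclideanSpace ℝ (Fin d)) (r β μ ε s : ℝ)
    (z : EuclideanSpace ℝ (Fin d)) (τ : ℝ) : ℝ :=
  ε * Real.exp (-μ * (τ - s)) * max (r ^ 2 + β * (τ - s) - ‖z - y‖ ^ 2) 0 ^ 2

variable (y : EuclideanSpace ℝ (Fin d)) {r β μ ε s : ℝ} {z : EuclideanSpace ℝ (Fin d)} {τ : ℝ}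

theorem continuous_heatBarrier :
    Continuous fun p : EuclideanSpace ℝ (Fin d) × ℝ => heatBarrier y r β μ ε s p.1 p.2 := by
  unfold heatBarrier; fun_prop

theorem heatBarrier_eq_zero (h : r ^ 2 + β * (τ - s) ≤ ‖z - y‖ ^ 2) :
    heatBarrier y r β μ ε s z τ = 0 := by
  simp [heatBarrier, max_eq_right (sub_nonpos.2 h)]

theorem heatBarrier_pos (hε : 0 < ε) (h : ‖z - y‖ ^ 2 < r ^ 2 + β * (τ - s)) :
    0 < heatBarrier y r β μ ε s z τ := by
  unfold heatBarrier
  have : 0 < r ^ 2 + β * (τ - s) - ‖z - y‖ ^ 2 := sub_pos.2 h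
  positivity

theorem heatBarrier_start_le (hε : 0 ≤ ε) : heatBarrier y r β μ ε s z s ≤ ε * r ^ 4 := by
  have h : max (r ^ 2 - ‖z - y‖ ^ 2) 0 ≤ r ^ 2 :=
    max_le (by nlinarith [norm_nonneg (z - y)]) (by positivity)
  simp only [heatBarrier, sub_self, mul_zero, Real.exp_zero, mul_one, add_zero]
  calc ε * max (r ^ 2 - ‖z - y‖ ^ 2) 0 ^ 2 ≤ ε * (r ^ 2) ^ 2 := by gcongr
    _ = ε * r ^ 4 := by ring

/-- The square makes the barrier a subsolution up to the edge of its support: there the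
gradient term `2 A ‖∇‖z - y‖²‖² = 8 A ‖z - y‖²` of its Laplacian stays positive. -/
theorem isStrictSubsolutionAt_heatBarrier (hε : 0 < ε) (hβ : 0 ≤ β) (hτ : s ≤ τ)
    (hμ : (2 * β + 4 * d + 8) ^ 2 < 32 * μ * r ^ 2)
    (h : ‖z - y‖ ^ 2 < r ^ 2 + β * (τ - s)) :
    IsStrictSubsolutionAt (heatBarrier y r β μ ε s) z τ := by
  set A := ε * Real.exp (-μ * (τ - s))
  set b := r ^ 2 + β * (τ - s)
  set ρ := ‖z - y‖ ^ 2
  have hA : 0 < A := by positivity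
  have hbr : r ^ 2 ≤ b := le_add_of_nonneg_right (mul_nonneg hβ (sub_nonneg.2 hτ))
  have hspace : (fun w => heatBarrier y r β μ ε s w τ) =ᶠ[𝓝 z]
      fun w => A * (b - ‖w - y‖ ^ 2) ^ 2 := by
    have : Continuous fun w : EuclideanSpace ℝ (Fin d) => b - ‖w - y‖ ^ 2 := by fun_prop
    filter_upwards [(this.tendsto z).eventually (lt_mem_nhds (sub_pos.2 h))] with w hw
    simp [heatBarrier, max_eq_left hw.le, A, b]
  have htime : (fun σ => heatBarrier y r β μ ε s z σ) =ᶠ[𝓝 τ]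
      fun σ => ε * Real.exp (-μ * (σ - s)) * (r ^ 2 + β * (σ - s) - ρ) ^ 2 := by
    have : Continuous fun σ : ℝ => r ^ 2 + β * (σ - s) - ρ := by fun_prop
    filter_upwards [(this.tendsto τ).eventually (lt_mem_nhds (sub_pos.2 h))] with σ hσ
    simp [heatBarrier, max_eq_left hσ.le, ρ]
  refine ⟨((contDiff_const.mul ((contDiff_const.sub (contDiff_norm_sub_sq y)).pow 2)).contDiffAt
    ).congr_of_eventuallyEq hspace, A * (2 * β * (b - ρ) - μ * (b - ρ) ^ 2), ?_, ?_⟩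
  · rw [hspace.laplacian_eq, laplacian_mul_sub_norm_sub_sq_sq]
    have hq : 0 < b - ρ := sub_pos.2 h
    have hμ0 : 0 < μ := by nlinarith [sq_nonneg (2 * β + 4 * d + 8), sq_nonneg r]
    -- `hμ` says that this quadratic in `b - ρ` has negative discriminant, as `r ^ 2 ≤ b`
    have : 0 < μ * (b - ρ) ^ 2 - (2 * β + 4 * d + 8) * (b - ρ) + 8 * b := by
      nlinarith [sq_nonneg (2 * μ * (b - ρ) - (2 * β + 4 * d + 8))]
    nlinarith
  · have hexp : HasDerivAt (fun σ => ε * Real.exp (-μ * (σ - s))) (A * -μ) τ :=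
      ((((hasDerivAt_id τ).sub_const s).const_mul (-μ)).exp.const_mul ε).congr_deriv
        (by simp only [id_eq, neg_mul, mul_one, mul_neg, neg_inj, A]; ring)
    have hsq : HasDerivAt (fun σ => (r ^ 2 + β * (σ - s) - ρ) ^ 2) (2 * (b - ρ) * β) τ :=
      (((((hasDerivAt_id τ).sub_const s).const_mul β).const_add (r ^ 2)).sub_const ρ).pow 2
        |>.congr_deriv (by simp [b])
    exact ((hexp.mul hsq).congr_deriv (by ring)).congr_of_eventuallyEq htime

end Barrier

section Positivity

variable {d : ℕ} {D : Set (EuclideanSpace ℝ (Fin d))} {s t : ℝ}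
  {v : EuclideanSpace ℝ (Fin d) → ℝ → ℝ}

theorem IsHeatSolution.heatBarrier_le {y : EuclideanSpace ℝ (Fin d)} {R r β μ ε : ℝ}
    (hv : IsHeatSolution (ball y R) s t v) (hst : s ≤ t)
    (hv_nonneg : ∀ z ∈ closedBall y R, ∀ τ ∈ Icc s t, 0 ≤ v z τ)
    (hr : 0 < r) (hR : 0 < R) (hε : 0 < ε) (hβ : 0 ≤ β)
    (hμ : (2 * β + 4 * d + 8) ^ 2 < 32 * μ * r ^ 2) (hβt : r ^ 2 + β * (t - s) ≤ R ^ 2)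
    (hv_start : ∀ z ∈ closedBall y r, ε * r ^ 4 ≤ v z s) :
    ∀ z ∈ closedBall y R, ∀ τ ∈ Icc s t, heatBarrier y r β μ ε s z τ ≤ v z τ := by
  rw [← closure_ball y hR.ne']
  refine hv.le_of_isStrictSubsolutionAt isOpen_ball isBounded_ball
    (continuous_heatBarrier y).continuousOn ?_ ?_ ?_
  · intro x hx τ hτ hlt
    refine isStrictSubsolutionAt_heatBarrier y hε hβ hτ.1.le hμ ?_
    by_contra! hxτ
    rw [heatBarrier_eq_zero y hxτ] at hlt
    exact hlt.not_ge (hv_nonneg x (ball_subset_closedBall hx) τ (Ioc_subset_Icc_self hτ))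
  · intro x hx
    rw [closure_ball y hR.ne'] at hx
    by_cases hxr : x ∈ closedBall y r
    · exact (heatBarrier_start_le y hε.le).trans (hv_start x hxr)
    · rw [mem_closedBall_iff_norm, not_le] at hxr
      rw [heatBarrier_eq_zero y (by nlinarith)]
      exact hv_nonneg x hx s ⟨le_rfl, hst⟩
  · intro x hx τ hτ
    rw [frontier_ball y hR.ne', mem_sphere_iff_norm] at hx
    rw [heatBarrier_eq_zero y (by rw [hx]; nlinarith [hτ.2])]
    exact hv_nonneg x (sphere_subset_closedBall (mem_sphere_iff_norm.2 hx)) τ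
      (Ioc_subset_Icc_self hτ)

theorem IsHeatSolution.pos_of_le_on_closedBall {y : EuclideanSpace ℝ (Fin d)} {R r c : ℝ}
    (hv : IsHeatSolution (ball y R) s t v) (hst : s < t)
    (hv_nonneg : ∀ z ∈ closedBall y R, ∀ τ ∈ Icc s t, 0 ≤ v z τ)
    (hr : 0 < r) (hrR : r ≤ R) (hc : 0 < c) (hcv : ∀ z ∈ closedBall y r, c ≤ v z s) :
    ∀ z ∈ ball y R, 0 < v z t := by
  intro z hz
  -- the support of the barrier grows from `closedBall y r` at time `s` to `ball y R` at time `t`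
  set β := (R ^ 2 - r ^ 2) / (t - s)
  set μ := (2 * β + 4 * d + 8) ^ 2 / (16 * r ^ 2)
  set ε := c / r ^ 4
  have hβ : 0 ≤ β := div_nonneg (by nlinarith) (by linarith)
  have hβt : r ^ 2 + β * (t - s) = R ^ 2 := by
    simp only [β]; field_simp [(sub_pos.2 hst).ne']; ring
  have hμ : (2 * β + 4 * d + 8) ^ 2 < 32 * μ * r ^ 2 := by
    have : 32 * μ * r ^ 2 = 2 * (2 * β + 4 * d + 8) ^ 2 := by simp only [μ]; field_simp; ring
    have : 0 < 2 * β + 4 * d + 8 := by positivity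
    nlinarith
  have hε : 0 < ε := by positivity
  have hεc : ε * r ^ 4 = c := by simp only [ε]; field_simp
  have hle := hv.heatBarrier_le hst.le hv_nonneg hr (hr.trans_le hrR) hε hβ hμ hβt.le
    (hεc ▸ hcv) z (ball_subset_closedBall hz) t ⟨hst.le, le_rfl⟩
  refine (heatBarrier_pos y hε ?_).trans_le hle
  rw [hβt]
  have := mem_ball_iff_norm.1 hz
  nlinarith [norm_nonneg (z - y)]

theorem IsHeatSolution.pos_of_pos (hv : IsHeatSolution D s t v) (hst : s < t)
    (hv_nonneg : ∀ x ∈ closure D, ∀ τ ∈ Icc s t, 0 ≤ v x τ) {x : EuclideanSpace ℝ (Fin d)}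
    {R : ℝ} (hR : closedBall x R ⊆ D) (hpos : 0 < v x s) : ∀ z ∈ ball x R, 0 < v z t := by
  intro z hz
  have hR0 : 0 < R := pos_of_mem_ball hz
  have hcont : ContinuousAt (fun y => v y s) x := by
    have : ContinuousOn (fun y => v y s) (closure D) :=
      hv.continuousOn.comp (continuous_id.prodMk continuous_const).continuousOn
        fun y hy => ⟨hy, left_mem_Icc.2 hst.le⟩
    exact this.continuousAt (mem_of_superset (closedBall_mem_nhds x hR0) (hR.trans subset_closure))
  obtain ⟨r, hr, hr_sub⟩ := nhds_basis_closedBall.mem_iff.1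
    (hcont.preimage_mem_nhds (Ici_mem_nhds (half_lt_self hpos)))
  exact (hv.mono (ball_subset_closedBall.trans hR) le_rfl le_rfl).pos_of_le_on_closedBall hst
    (fun y hy τ hτ => hv_nonneg y (subset_closure (hR hy)) τ hτ) (lt_min hr hR0)
    (min_le_right _ _) (half_pos hpos)
    (fun y hy => hr_sub (closedBall_subset_closedBall (min_le_left _ _) hy)) z hz

end Positivity

theorem IsPreconnected.subset_of_forall_ball_subset {α : Type*} [PseudoMetricSpace α]
    {D u : Set α} (hD : IsPreconnected D) (hD_open : IsOpen D) (huD : u ⊆ D) (hu : u.Nonempty)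
    (hball : ∀ x ∈ u, ∀ R, closedBall x R ⊆ D → ball x R ⊆ u) : D ⊆ u := by
  have hu_open : IsOpen u := Metric.isOpen_iff.2 fun x hx => by
    obtain ⟨ε, hε, hεD⟩ := Metric.isOpen_iff.1 hD_open x (huD hx)
    exact ⟨ε / 2, half_pos hε,
      hball x hx _ ((closedBall_subset_ball (half_lt_self hε)).trans hεD)⟩
  refine hD.subset_of_closure_inter_subset hu_open (by simpa [inter_eq_right.2 huD]) ?_
  rintro z ⟨hz_cl, hzD⟩
  obtain ⟨ε, hε, hεD⟩ := Metric.isOpen_iff.1 hD_open z hzD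
  obtain ⟨x, hxu, hxz⟩ := Metric.mem_closure_iff.1 hz_cl (ε / 3) (by positivity)
  refine hball x hxu (ε / 3) (fun w hw => hεD ?_) (mem_ball.2 hxz)
  rw [mem_closedBall] at hw
  rw [mem_ball]
  linarith [dist_triangle w x z, dist_comm x z]

theorem heat_equation_strict_positivity_general
    (d : ℕ) (D : Set (EuclideanSpace ℝ (Fin d)))
    (hD_open : IsOpen D) (hD_bdd : Bornology.IsBounded D) (hD_conn : IsConnected D)
    (T : ℝ)
    (v : EuclideanSpace ℝ (Fin d) → ℝ → ℝ) (u₀ : EuclideanSpace ℝ (Fin d) → ℝ)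
    -- (i) `v` is continuous on `closure D × [0,T]`
    (hv_cont : ContinuousOn (fun p : EuclideanSpace ℝ (Fin d) × ℝ => v p.1 p.2)
      ((closure D) ×ˢ Icc 0 T))
    -- (ii) for each `t ∈ (0,T]`, `x ↦ v x t` is C² on `D`, and for each `x ∈ D`,
    -- `t ↦ v x t` is differentiable on `(0,T]` with `∂v/∂t = Δₓ v`
    (hv_space : ∀ t ∈ Ioc (0 : ℝ) T, ContDiffOn ℝ 2 (fun x => v x t) D)
    (hv_heat : ∀ x ∈ D, ∀ t ∈ Ioc (0 : ℝ) T,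
      HasDerivWithinAt (fun τ => v x τ) (laplacian (fun y => v y t) x) (Ioc 0 T) t)
    -- (iii) homogeneous Dirichlet boundary condition
    (hv_bdry : ∀ x ∈ frontier D, ∀ t ∈ Ioc (0 : ℝ) T, v x t = 0)
    -- (iv) initial condition with continuous, nonnegative, nontrivial `u₀`
    (hv_init : ∀ x ∈ closure D, v x 0 = u₀ x)
    (hu₀_cont : Continuous u₀)
    (hu₀_nonneg : ∀ x ∈ D, 0 ≤ u₀ x)
    (hu₀_ne : ∃ x ∈ D, u₀ x ≠ 0) :
    ∀ x ∈ D, ∀ t ∈ Ioc (0 : ℝ) T, 0 < v x t := by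
  have hv : IsHeatSolution D 0 T v := ⟨hv_cont, hv_space, hv_heat⟩
  have hv_nonneg : ∀ x ∈ closure D, ∀ t ∈ Icc 0 T, 0 ≤ v x t :=
    hv.nonneg hD_open hD_bdd
      (fun x hx => hv_init x hx ▸
        closure_minimal hu₀_nonneg (isClosed_le continuous_const hu₀_cont) hx)
      fun x hx t ht => (hv_bdry x hx t ht).ge
  have hspread : ∀ x s t R, 0 ≤ s → s < t → t ≤ T → 0 < v x s → closedBall x R ⊆ D →
      ∀ z ∈ ball x R, 0 < v z t := fun x s t R hs hst htT hxs hR =>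
    (hv.mono subset_rfl hs htT).pos_of_pos hst
      (fun y hy τ hτ => hv_nonneg y hy τ ⟨hs.trans hτ.1, hτ.2.trans htT⟩) hR hxs
  suffices D ⊆ {x ∈ D | ∀ t ∈ Ioc 0 T, 0 < v x t} from fun x hx => (this hx).2
  refine hD_conn.isPreconnected.subset_of_forall_ball_subset hD_open (sep_subset _ _) ?_ ?_
  · obtain ⟨x₀, hx₀, hu₀x₀⟩ := hu₀_ne
    have hpos : 0 < v x₀ 0 :=
      hv_init x₀ (subset_closure hx₀) ▸ (hu₀_nonneg x₀ hx₀).lt_of_ne' hu₀x₀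
    obtain ⟨R, hR, hRD⟩ := nhds_basis_closedBall.mem_iff.1 (hD_open.mem_nhds hx₀)
    exact ⟨x₀, hx₀, fun t ht => hspread x₀ 0 t R le_rfl ht.1 ht.2 hpos hRD x₀ (mem_ball_self hR)⟩
  · rintro x ⟨-, hx⟩ R hR z hz
    refine ⟨hR (ball_subset_closedBall hz), fun t ht => ?_⟩
    exact hspread x (t / 2) t R (by linarith [ht.1]) (by linarith [ht.1]) ht.2
      (hx _ ⟨by linarith [ht.1], by linarith [ht.1, ht.2]⟩) hR z hz

/-- Lemma 2.2: strict positivity, by the strong maximum principle, of the solution of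
the heat equation on a nonempty open bounded connected domain `D ⊆ ℝ^d` over `(0,T]`,
with homogeneous Dirichlet boundary data and nonnegative, not identically zero,
continuous initial data `u₀`. -/
theorem heat_equation_strict_positivity
    (d : ℕ) (hd : 1 ≤ d) (D : Set (EuclideanSpace ℝ (Fin d)))
    (hD_open : IsOpen D) (hD_bdd : Bornology.IsBounded D) (hD_conn : IsConnected D)
    (T : ℝ) (hT : 0 < T)
    (v : EuclideanSpace ℝ (Fin d) → ℝ → ℝ) (u₀ : EuclideanSpace ℝ (Fin d) → ℝ)
    -- (i) `v` is continuous on `closure D × [0,T]`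
    (hv_cont : ContinuousOn (fun p : EuclideanSpace ℝ (Fin d) × ℝ => v p.1 p.2)
      ((closure D) ×ˢ Icc 0 T))
    -- (ii) for each `t ∈ (0,T]`, `x ↦ v x t` is C² on `D`, and for each `x ∈ D`,
    -- `t ↦ v x t` is differentiable on `(0,T]` with `∂v/∂t = Δₓ v`
    (hv_space : ∀ t ∈ Ioc (0 : ℝ) T, ContDiffOn ℝ 2 (fun x => v x t) D)
    (hv_heat : ∀ x ∈ D, ∀ t ∈ Ioc (0 : ℝ) T,
      HasDerivWithinAt (fun τ => v x τ) (laplacian (fun y => v y t) x) (Ioc 0 T) t)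
    -- (iii) homogeneous Dirichlet boundary condition
    (hv_bdry : ∀ x ∈ frontier D, ∀ t ∈ Ioc (0 : ℝ) T, v x t = 0)
    -- (iv) initial condition with continuous, nonnegative, nontrivial `u₀`
    (hv_init : ∀ x ∈ closure D, v x 0 = u₀ x)
    (hu₀_cont : Continuous u₀)
    (hu₀_nonneg : ∀ x ∈ D, 0 ≤ u₀ x)
    (hu₀_ne : ∃ x ∈ D, u₀ x ≠ 0) :
    ∀ x ∈ D, ∀ t ∈ Ioc (0 : ℝ) T, 0 < v x t :=
  heat_equation_strict_positivity_general d D hD_open hD_bdd hD_conn T v u₀ hv_cont hv_space hv_heat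
    hv_bdry hv_init hu₀_cont hu₀_nonneg hu₀_ne
end
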